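/- If Z has the extended skew-normal density f(z) = (1/Φ(τ)) φ(z) Φ(τ√(1+α²) + αz), then Var[Z] = 1 + ζ₂(τ)·δ², where ζ₂(x) = −ζ₁(x)·x − ζ₁(x)² with ζ₁(x) = φ(x)/Φ(x), and δ = α/√(1+α²). -/

import Mathlib

/-!
Put `s = √(1 + α²)`. Since `Φ(sτ + αz) = s ∫_{u ≤ τ} φ(su + αz) du` and
`φ(z) φ(su + αz) = φ(u) φ(sz + αu)` (a rotation of the standard bivariate normal density),
Fubini turns `∫ f(z) φ(z) Φ(sτ + αz) dz` into `∫_{u ≤ τ} φ(u) E[f((W - αu)/s)] du` with `W`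
standard normal. For `f(z) = z, z²` the inner expectation is a quadratic polynomial in `u`, and the
truncated moments `∫_{u ≤ τ} u φ = -φ(τ)`, `∫_{u ≤ τ} u² φ = Φ(τ) - τ φ(τ)` give
`E[Z] = δ φ(τ)/Φ(τ)` and `E[Z²] = 1 - δ² τ φ(τ)/Φ(τ)`.
-/

open MeasureTheory Real

noncomputable def phi (x : ℝ) : ℝ := (Real.sqrt (2 * Real.pi))⁻¹ * Real.exp (-x ^ 2 / 2)

noncomputable def Phi (x : ℝ) : ℝ := ∫ t in Set.Iic x, phi t

noncomputable def zeta1 (x : ℝ) : ℝ := phi x / Phi x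

noncomputable def zeta2 (x : ℝ) : ℝ := -(zeta1 x * x + (zeta1 x) ^ 2)

/-- ESN(0,1,α,τ) density -/
noncomputable def esnPdf (α τ z : ℝ) : ℝ :=
  (Phi τ)⁻¹ * phi z * Phi (τ * Real.sqrt (1 + α ^ 2) + α * z)

open Set Filter

lemma setIntegral_Iic_eq_of_hasDerivAt_of_integrable {E : Type*} [NormedAddCommGroup E]
    [NormedSpace ℝ E] [CompleteSpace E] {f f' : ℝ → E} (hderiv : ∀ x, HasDerivAt f (f' x) x)
    (hf' : Integrable f') (hf : Integrable f) (a : ℝ) :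
    ∫ x in Iic a, f' x = f a := by
  have hbot : Tendsto f atBot (nhds 0) :=
    tendsto_zero_of_hasDerivAt_of_integrableOn_Iic (a := a) (fun x _ ↦ hderiv x)
      hf'.integrableOn hf.integrableOn
  simpa using integral_Iic_of_hasDerivAt_of_tendsto' (fun x _ ↦ hderiv x) hf'.integrableOn hbot

lemma integral_comp_mul_add {E : Type*} [NormedAddCommGroup E] [NormedSpace ℝ E]
    (g : ℝ → E) (s c : ℝ) :
    ∫ x, g (s * x + c) = |s⁻¹| • ∫ y, g y := by
  rw [Measure.integral_comp_mul_left (fun y ↦ g (y + c)) s, integral_add_right_eq_self g c]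

lemma setIntegral_Iic_comp_mul_add {E : Type*} [NormedAddCommGroup E] [NormedSpace ℝ E] {s : ℝ}
    (hs : 0 < s) (g : ℝ → E) (a c : ℝ) :
    ∫ x in Iic a, g (s * x + c) = s⁻¹ • ∫ y in Iic (s * a + c), g y := by
  have hmem : ∀ x, s * x + c ∈ Iic (s * a + c) ↔ x ∈ Iic a := fun x ↦ by
    simp only [mem_Iic, add_le_add_iff_right, mul_le_mul_iff_right₀ hs]
  have hind : ∀ x, (Iic a).indicator (fun x ↦ g (s * x + c)) x
      = (Iic (s * a + c)).indicator g (s * x + c) := fun x ↦ by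
    simp only [indicator_apply, hmem]
  rw [← integral_indicator measurableSet_Iic, ← integral_indicator measurableSet_Iic]
  simp_rw [hind]
  rw [integral_comp_mul_add, abs_of_pos (inv_pos.2 hs)]

lemma phi_eq (x : ℝ) : phi x = (√(2 * π))⁻¹ * exp (-(1 / 2) * x ^ 2) := by
  rw [phi]; ring_nf

lemma phi_pos (x : ℝ) : 0 < phi x := by
  unfold phi; positivity

lemma continuous_phi : Continuous phi := by
  unfold phi; fun_prop

lemma hasDerivAt_phi (x : ℝ) : HasDerivAt phi (-x * phi x) x := by
  have h : HasDerivAt (fun y : ℝ ↦ -y ^ 2 / 2) (-x) x :=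
    ((hasDerivAt_pow 2 x).fun_neg.div_const 2).congr_deriv (by push_cast; ring)
  exact (h.exp.const_mul (√(2 * π))⁻¹).congr_deriv (by rw [phi]; ring)

lemma integrable_pow_mul_phi (k : ℕ) : Integrable fun x ↦ x ^ k * phi x := by
  have h := (integrable_rpow_mul_exp_neg_mul_sq (b := 1 / 2) (by norm_num)
    (s := k) (by linarith [k.cast_nonneg (α := ℝ)])).const_mul (√(2 * π))⁻¹
  refine h.congr (ae_of_all _ fun x ↦ ?_)
  simp only [rpow_natCast, phi_eq]
  ring

lemma integrable_phi : Integrable phi := by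
  simpa using integrable_pow_mul_phi 0

lemma integrable_mul_phi : Integrable fun x ↦ x * phi x := by
  simpa using integrable_pow_mul_phi 1

lemma integral_phi : ∫ x, phi x = 1 := by
  simp_rw [phi_eq]
  rw [integral_const_mul, integral_gaussian, show π / (1 / 2) = 2 * π by ring,
    inv_mul_cancel₀ (by positivity)]

lemma hasDerivAt_neg_phi (x : ℝ) : HasDerivAt (fun x ↦ -phi x) (x * phi x) x := by
  simpa using (hasDerivAt_phi x).fun_neg

lemma hasDerivAt_neg_mul_phi (x : ℝ) :
    HasDerivAt (fun x ↦ -(x * phi x)) (x ^ 2 * phi x - phi x) x :=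
  ((hasDerivAt_id x).mul (hasDerivAt_phi x)).fun_neg.congr_deriv (by simp; ring)

lemma integral_mul_phi : ∫ x, x * phi x = 0 :=
  integral_eq_zero_of_hasDerivAt_of_integrable hasDerivAt_neg_phi integrable_mul_phi
    integrable_phi.neg

lemma integral_sq_mul_phi : ∫ x, x ^ 2 * phi x = 1 := by
  have h := integral_eq_zero_of_hasDerivAt_of_integrable hasDerivAt_neg_mul_phi
    ((integrable_pow_mul_phi 2).sub integrable_phi) integrable_mul_phi.neg
  rwa [integral_sub (integrable_pow_mul_phi 2) integrable_phi, integral_phi, sub_eq_zero] at h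

lemma setIntegral_Iic_mul_phi (a : ℝ) : ∫ x in Iic a, x * phi x = -phi a :=
  setIntegral_Iic_eq_of_hasDerivAt_of_integrable hasDerivAt_neg_phi integrable_mul_phi
    integrable_phi.neg a

lemma setIntegral_Iic_sq_mul_phi (a : ℝ) :
    ∫ x in Iic a, x ^ 2 * phi x = Phi a - a * phi a := by
  have h := setIntegral_Iic_eq_of_hasDerivAt_of_integrable hasDerivAt_neg_mul_phi
    ((integrable_pow_mul_phi 2).sub integrable_phi) integrable_mul_phi.neg a
  rw [integral_sub (integrable_pow_mul_phi 2).integrableOn integrable_phi.integrableOn] at h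
  rw [Phi]; linarith

lemma Phi_pos (x : ℝ) : 0 < Phi x := by
  rw [Phi, setIntegral_pos_iff_support_of_nonneg_ae (ae_of_all _ fun t ↦ (phi_pos t).le)
    integrable_phi.integrableOn, Function.support_eq_univ fun t ↦ (phi_pos t).ne',
    univ_inter, volume_Iic]
  exact ENNReal.zero_lt_top

lemma Phi_le_one (x : ℝ) : Phi x ≤ 1 :=
  integral_phi ▸ setIntegral_le_integral integrable_phi (ae_of_all _ fun t ↦ (phi_pos t).le)

lemma Phi_mul_add {s : ℝ} (hs : 0 < s) (a c : ℝ) :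
    Phi (s * a + c) = s * ∫ u in Iic a, phi (s * u + c) := by
  rw [setIntegral_Iic_comp_mul_add hs, smul_eq_mul, mul_inv_cancel_left₀ hs.ne', Phi]

lemma phi_mul_phi_mul_add {α s : ℝ} (hs : s ^ 2 = 1 + α ^ 2) (u z : ℝ) :
    phi z * phi (s * u + α * z) = phi u * phi (s * z + α * u) := by
  have hsq : z ^ 2 + (s * u + α * z) ^ 2 = u ^ 2 + (s * z + α * u) ^ 2 := by
    linear_combination (u ^ 2 - z ^ 2) * hs
  simp only [phi, mul_mul_mul_comm _ (exp _), ← exp_add]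
  congr 2
  linear_combination -hsq / 2

lemma integral_mul_phi_mul_add {f : ℝ → ℝ} {s : ℝ} (hs : 0 < s) (c : ℝ) :
    ∫ z, f z * phi (s * z + c) = s⁻¹ * ∫ w, f ((w - c) / s) * phi w := by
  rw [← abs_of_pos (inv_pos.2 hs), ← smul_eq_mul,
    ← integral_comp_mul_add (fun w ↦ f ((w - c) / s) * phi w) s c]
  simp_rw [add_sub_cancel_right, mul_div_cancel_left₀ _ hs.ne']

theorem integral_mul_phi_mul_Phi_eq_setIntegral_Iic {f : ℝ → ℝ}
    (hf : Integrable fun z ↦ f z * phi z) {α s : ℝ} (hs : 0 < s) (hsα : s ^ 2 = 1 + α ^ 2)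
    (τ : ℝ) :
    ∫ z, f z * phi z * Phi (s * τ + α * z)
      = ∫ u in Iic τ, phi u * ∫ w, f ((w - α * u) / s) * phi w := by
  set F : ℝ → ℝ → ℝ := fun z u ↦ f z * phi z * (s * phi (s * u + α * z))
  have hF : Integrable (Function.uncurry F) (volume.prod (volume.restrict (Iic τ))) := by
    have hmeas : AEStronglyMeasurable (Function.uncurry F)
        (volume.prod (volume.restrict (Iic τ))) :=
      hf.1.comp_fst.mul
        (continuous_const.mul (continuous_phi.comp (by fun_prop))).aestronglyMeasurable
    refine (integrable_prod_iff hmeas).2 ⟨ae_of_all _ fun z ↦ ?_, ?_⟩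
    · exact (((integrable_phi.comp_add_right (α * z)).comp_mul_left' hs.ne').const_mul s
        |>.const_mul (f z * phi z)).integrableOn
    refine hf.norm.mono' hmeas.norm.integral_prod_right' (ae_of_all _ fun z ↦ ?_)
    have hnorm : ∀ u, ‖F z u‖ = ‖f z * phi z‖ * (s * phi (s * u + α * z)) := fun u ↦ by
      rw [norm_mul _ (s * _), Real.norm_of_nonneg (mul_nonneg hs.le (phi_pos _).le)]
    simp_rw [Function.uncurry_apply_pair, hnorm, integral_const_mul, ← Phi_mul_add hs]
    rw [norm_mul, norm_norm, Real.norm_of_nonneg (Phi_pos _).le]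
    exact mul_le_of_le_one_right (norm_nonneg _) (Phi_le_one _)
  calc ∫ z, f z * phi z * Phi (s * τ + α * z) = ∫ z, ∫ u in Iic τ, F z u := by
        simp_rw [F, integral_const_mul, Phi_mul_add hs]
    _ = ∫ u in Iic τ, ∫ z, F z u := integral_integral_swap hF
    _ = ∫ u in Iic τ, phi u * ∫ w, f ((w - α * u) / s) * phi w := by
        congr 1 with u
        calc ∫ z, F z u = s * phi u * ∫ z, f z * phi (s * z + α * u) := by
              rw [← integral_const_mul]
              congr 1 with z
              rw [show F z u = s * f z * (phi z * phi (s * u + α * z)) by ring,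
                phi_mul_phi_mul_add hsα]
              ring
          _ = _ := by
              rw [integral_mul_phi_mul_add hs]
              field_simp

lemma integral_quadratic_mul_phi (a b c : ℝ) {f : ℝ → ℝ}
    (hf : ∀ x, f x = a + b * x + c * x ^ 2) : ∫ x, f x * phi x = a + c := by
  have h01 : Integrable fun x ↦ a * phi x + b * (x * phi x) :=
    (integrable_phi.const_mul a).add (integrable_mul_phi.const_mul b)
  have h1 := integrable_mul_phi.const_mul b
  have h2 := (integrable_pow_mul_phi 2).const_mul c
  simp_rw [hf, add_mul, mul_assoc]
  rw [integral_add h01 h2,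
    integral_add (integrable_phi.const_mul a) h1, integral_const_mul, integral_const_mul,
    integral_const_mul, integral_phi, integral_mul_phi, integral_sq_mul_phi]
  ring

lemma setIntegral_Iic_quadratic_mul_phi (a b c : ℝ) {f : ℝ → ℝ}
    (hf : ∀ x, f x = a + b * x + c * x ^ 2) (t : ℝ) :
    ∫ x in Iic t, f x * phi x = (a + c) * Phi t - (b + c * t) * phi t := by
  have h01 : IntegrableOn (fun x ↦ a * phi x + b * (x * phi x)) (Iic t) :=
    ((integrable_phi.const_mul a).add (integrable_mul_phi.const_mul b)).integrableOn
  have h1 := (integrable_mul_phi.const_mul b).integrableOn (s := Iic t)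
  have h2 := ((integrable_pow_mul_phi 2).const_mul c).integrableOn (s := Iic t)
  simp_rw [hf, add_mul, mul_assoc]
  rw [integral_add h01 h2,
    integral_add (integrable_phi.integrableOn.const_mul a) h1, integral_const_mul,
    integral_const_mul, integral_const_mul, ← Phi, setIntegral_Iic_mul_phi,
    setIntegral_Iic_sq_mul_phi]
  ring

section Moments

variable {α s : ℝ} (hs : 0 < s) (hsα : s ^ 2 = 1 + α ^ 2) (τ : ℝ)
include hs hsα

lemma integral_mul_phi_mul_Phi :
    ∫ z, z * phi z * Phi (s * τ + α * z) = α / s * phi τ := by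
  have hinner : ∀ u, ∫ w, (w - α * u) / s * phi w = -(α / s) * u := fun u ↦
    (integral_quadratic_mul_phi (-(α / s) * u) s⁻¹ 0 fun w ↦ by ring).trans (by ring)
  rw [integral_mul_phi_mul_Phi_eq_setIntegral_Iic (f := fun z ↦ z) integrable_mul_phi hs hsα]
  simp_rw [hinner, mul_comm (phi _)]
  rw [setIntegral_Iic_quadratic_mul_phi 0 (-(α / s)) 0 fun u ↦ by ring]
  ring

lemma integral_sq_mul_phi_mul_Phi :
    ∫ z, z ^ 2 * phi z * Phi (s * τ + α * z) = Phi τ - (α / s) ^ 2 * τ * phi τ := by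
  have hinner : ∀ u, ∫ w, ((w - α * u) / s) ^ 2 * phi w = (1 + α ^ 2 * u ^ 2) / s ^ 2 :=
    fun u ↦ (integral_quadratic_mul_phi ((α * u / s) ^ 2) (-(2 * α * u / s ^ 2)) (s ^ 2)⁻¹
      fun w ↦ by ring).trans (by ring)
  rw [integral_mul_phi_mul_Phi_eq_setIntegral_Iic (f := fun z ↦ z ^ 2)
    (integrable_pow_mul_phi 2) hs hsα]
  simp_rw [hinner, mul_comm (phi _)]
  rw [setIntegral_Iic_quadratic_mul_phi (s ^ 2)⁻¹ 0 ((α / s) ^ 2) fun u ↦ by ring]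
  field_simp
  rw [hsα]
  ring

end Moments

theorem esn_variance (α τ : ℝ) :
    (∫ z : ℝ, z ^ 2 * esnPdf α τ z) - (∫ z : ℝ, z * esnPdf α τ z) ^ 2 =
      1 + zeta2 τ * (α / Real.sqrt (1 + α ^ 2)) ^ 2 := by
  set s := √(1 + α ^ 2)
  have hs : 0 < s := sqrt_pos.2 (by positivity)
  have hsα : s ^ 2 = 1 + α ^ 2 := sq_sqrt (by positivity)
  have hmoment : ∀ g : ℝ → ℝ, ∫ z, g z * esnPdf α τ z
      = (Phi τ)⁻¹ * ∫ z, g z * phi z * Phi (s * τ + α * z) := fun g ↦ by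
    rw [← integral_const_mul]
    congr 1 with z
    rw [esnPdf, mul_comm τ]
    ring
  rw [hmoment (· ^ 2), hmoment fun z ↦ z, integral_sq_mul_phi_mul_Phi hs hsα,
    integral_mul_phi_mul_Phi hs hsα, zeta2, zeta1]
  field_simp [(Phi_pos τ).ne']
  ring
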